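/- arXiv:1607.03819 — 7 statements merged into one kernel-verified Lean document; each statement's English description precedes it below -/
import Mathlib

section
/- Let A be a finite set and let α, β be subsets of A with α ∪ β = A. Let k ≥ 1 and let x, y, z : Fin k → A. Suppose that for every choice function c : Fin k → Fin 3, selecting for each index i one of the three pairs (x i, y i), (y i, z i), (x i, z i), there exists an index i such that ρ holds of the pair selected at i. Then there exists an index i such that ρ'(x i, y i, z i) holds. (This is the nontrivial direction of the claim that τ_k is defined by the conjunction of the 3^k instances of σ_k obtained by choosing two variables from each triple.) -/
/-- The binary relation ρ(u,v) := (u ∈ α ∧ v ∈ α) ∨ (u ∈ β ∧ v ∈ β). -/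
def rho {A : Type*} (α β : Set A) (u v : A) : Prop :=
  (u ∈ α ∧ v ∈ α) ∨ (u ∈ β ∧ v ∈ β)

/-- The ternary relation ρ'(u,v,w) := (u,v,w ∈ α) ∨ (u,v,w ∈ β). -/
def rho' {A : Type*} (α β : Set A) (u v w : A) : Prop :=
  (u ∈ α ∧ v ∈ α ∧ w ∈ α) ∨ (u ∈ β ∧ v ∈ β ∧ w ∈ β)

/-- For index `i`, the three possible pairs chosen from the triple `(x i, y i, z i)`:
choice `0` gives `(x i, y i)`, choice `1` gives `(y i, z i)`, choice `2` gives `(x i, z i)`. -/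
def sel {A : Type*} {k : ℕ} (x y z : Fin k → A) (i : Fin k) : Fin 3 → A × A :=
  ![(x i, y i), (y i, z i), (x i, z i)]

/-- the nontrivial direction of the claim that `τ_k` is defined by the
conjunction of the `3^k` instances of `σ_k` obtained by choosing two variables from
each triple. -/
theorem stmt0 {A : Type*} [Fintype A] (α β : Set A) (hU : α ∪ β = Set.univ)
    (k : ℕ) (hk : 1 ≤ k) (x y z : Fin k → A)
    (h : ∀ c : Fin k → Fin 3, ∃ i : Fin k,
      rho α β (sel x y z i (c i)).1 (sel x y z i (c i)).2) :
    ∃ i : Fin k, rho' α β (x i) (y i) (z i) := by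
  by_contra hcon
  push_neg at hcon
  have mem : ∀ a : A, a ∈ α ∨ a ∈ β := by
    intro a
    have : a ∈ α ∪ β := by rw [hU]; trivial
    exact this
  have key : ∀ i : Fin k, ∃ j : Fin 3,
      ¬ rho α β (sel x y z i j).1 (sel x y z i j).2 := by
    intro i
    have hni := hcon i
    simp only [rho'] at hni
    have hA : x i ∉ α ∨ y i ∉ α ∨ z i ∉ α := by tauto
    have hB : x i ∉ β ∨ y i ∉ β ∨ z i ∉ β := by tauto
    have m1 := mem (x i); have m2 := mem (y i); have m3 := mem (z i)
    rcases hA with ha|ha|ha <;> rcases hB with hb|hb|hb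
    · tauto
    · exact ⟨0, by simp [sel, rho]; tauto⟩
    · exact ⟨2, by simp [sel, rho]; tauto⟩
    · exact ⟨0, by simp [sel, rho]; tauto⟩
    · tauto
    · exact ⟨1, by simp [sel, rho]; tauto⟩
    · exact ⟨2, by simp [sel, rho]; tauto⟩
    · exact ⟨1, by simp [sel, rho]; tauto⟩
    · tauto
  choose c hc using key
  obtain ⟨i, hi⟩ := h c
  exact hc i hi
end

section
/- Let A be a finite set and let α, β be subsets of A with α ∪ β = A. Let m ≥ 1 and let f : (Fin m → A) → A be an m-ary operation on A. Suppose f preserves σ_k for every k ≥ 1, i.e., for all families x, y : Fin m → (Fin k → A) such that σ_k(x j, y j) holds for every j : Fin m, the coordinatewise images (fun i => f (fun j => x j i)) and (fun i => f (fun j => y j i)) satisfy σ_k. Then f preserves τ_k for every k ≥ 1: for all families x, y, z : Fin m → (Fin k → A) such that τ_k(x j, y j, z j) holds for every j : Fin m, the coordinatewise images satisfy τ_k. (Hence if every σ_k is invariant under an algebra 𝔸, then every τ_k is invariant under 𝔸.) -/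
/-- σ_k(x,y) := ∃ i, ρ(x i, y i). -/
def sigmaRel {A : Type*} (α β : Set A) {k : ℕ} (x y : Fin k → A) : Prop :=
  ∃ i, rho α β (x i) (y i)

/-- τ_k(x,y,z) := ∃ i, ρ'(x i, y i, z i). -/
def tau {A : Type*} (α β : Set A) {k : ℕ} (x y z : Fin k → A) : Prop :=
  ∃ i, rho' α β (x i) (y i) (z i)

/-- Pairwise ρ implies ρ'. -/
lemma rho'_of_pairwise {A : Type*} (α β : Set A) {u v w : A}
    (h1 : rho α β u v) (h2 : rho α β v w) (h3 : rho α β u w) :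
    rho' α β u v w := by
  unfold rho at h1 h2 h3
  unfold rho'
  tauto

/-- if an m-ary operation `f` preserves `σ_k` for every `k ≥ 1`,
then it preserves `τ_k` for every `k ≥ 1`. -/
theorem stmt2 {A : Type*} [Fintype A] (α β : Set A) (hU : α ∪ β = Set.univ)
    (m : ℕ) (hm : 1 ≤ m) (f : (Fin m → A) → A)
    (hσ : ∀ k : ℕ, 1 ≤ k → ∀ x y : Fin m → (Fin k → A),
      (∀ j : Fin m, sigmaRel α β (x j) (y j)) →
      sigmaRel α β (fun i => f (fun j => x j i)) (fun i => f (fun j => y j i))) :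
    ∀ k : ℕ, 1 ≤ k → ∀ x y z : Fin m → (Fin k → A),
      (∀ j : Fin m, tau α β (x j) (y j) (z j)) →
      tau α β (fun i => f (fun j => x j i)) (fun i => f (fun j => y j i))
        (fun i => f (fun j => z j i)) := by
  intro k hk x y z hxyz
  by_contra hc
  -- the images
  set F : Fin k → A := fun i => f (fun j => x j i) with hF
  set G : Fin k → A := fun i => f (fun j => y j i) with hG
  set H : Fin k → A := fun i => f (fun j => z j i) with hH
  -- at every coordinate, some pair among (F,G),(G,H),(F,H) fails ρ
  have hbad : ∀ i : Fin k,
      ¬ rho α β (F i) (G i) ∨ ¬ rho α β (G i) (H i) ∨ ¬ rho α β (F i) (H i) := by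
    intro i
    by_contra h
    push_neg at h
    exact hc ⟨i, rho'_of_pairwise α β h.1 h.2.1 h.2.2⟩
  -- select which pair fails at each coordinate: 0 ↦ (x,y), 1 ↦ (y,z), else (x,z)
  choose sel hsel using fun i =>
    (hbad i).elim (fun h => ⟨(0 : Fin 3), h⟩ : _ → ∃ s : Fin 3,
        if s = 0 then ¬ rho α β (F i) (G i)
        else if s = 1 then ¬ rho α β (G i) (H i) else ¬ rho α β (F i) (H i))
      (fun h => h.elim (fun h => ⟨(1 : Fin 3), h⟩) (fun h => ⟨(2 : Fin 3), h⟩))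
  -- build the σ-instance
  set X : Fin m → Fin k → A := fun j i =>
    if sel i = 0 then x j i else if sel i = 1 then y j i else x j i with hX
  set Y : Fin m → Fin k → A := fun j i =>
    if sel i = 0 then y j i else if sel i = 1 then z j i else z j i with hY
  have hprem : ∀ j : Fin m, sigmaRel α β (X j) (Y j) := by
    intro j
    obtain ⟨i, hi⟩ := hxyz j
    refine ⟨i, ?_⟩
    have h1 : rho α β (x j i) (y j i) := by
      rcases hi with ⟨h, _, _⟩ | ⟨h, _, _⟩
      · exact Or.inl ⟨h, by tauto⟩
      · exact Or.inr ⟨h, by tauto⟩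
    have h2 : rho α β (y j i) (z j i) := by
      rcases hi with ⟨_, h, h'⟩ | ⟨_, h, h'⟩
      · exact Or.inl ⟨h, h'⟩
      · exact Or.inr ⟨h, h'⟩
    have h3 : rho α β (x j i) (z j i) := by
      rcases hi with ⟨h, _, h'⟩ | ⟨h, _, h'⟩
      · exact Or.inl ⟨h, h'⟩
      · exact Or.inr ⟨h, h'⟩
    simp only [hX, hY]
    split_ifs <;> assumption
  obtain ⟨i, hi⟩ := hσ k hk X Y hprem
  -- the image pair at coordinate i is exactly the pair chosen to fail ρ
  have hXf : (fun j => X j i) = (if sel i = 0 then fun j => x j i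
      else if sel i = 1 then fun j => y j i else fun j => x j i) := by
    funext j; simp only [hX]; split_ifs <;> rfl
  have hYf : (fun j => Y j i) = (if sel i = 0 then fun j => y j i
      else if sel i = 1 then fun j => z j i else fun j => z j i) := by
    funext j; simp only [hY]; split_ifs <;> rfl
  have := hsel i
  have hi' : rho α β (f fun j => X j i) (f fun j => Y j i) := hi
  rw [hXf, hYf] at hi'
  split_ifs at hi' this <;> exact this hi'
end

section
/- Let A be a finite set and let α, β be subsets of A with α ∪ β = A. Let V be a set of variables and let C : Fin K → V × V × V be a family of K clauses, each a triple of variables. Suppose that for every Boolean assignment f : V → Bool there exists a clause index j such that f takes the same value on all three variables of clause C j. Then for every assignment g : V → A there exists a clause index j such that ρ'(g x_j, g y_j, g z_j) holds, where (x_j, y_j, z_j) = C j. (This is the forward direction of the correctness of the reduction from the complement of monotone 3-not-all-equal-satisfiability.) -/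
/-- forward direction of the correctness of the reduction from the
complement of monotone 3-not-all-equal-satisfiability. -/
theorem stmt3 {A : Type*} [Fintype A] (α β : Set A) (hU : α ∪ β = Set.univ)
    {V : Type*} (K : ℕ) (C : Fin K → V × V × V)
    (h : ∀ f : V → Bool, ∃ j : Fin K,
      f (C j).1 = f (C j).2.1 ∧ f (C j).2.1 = f (C j).2.2) :
    ∀ g : V → A, ∃ j : Fin K,
      rho' α β (g (C j).1) (g (C j).2.1) (g (C j).2.2) := by
  intro g
  classical
  obtain ⟨j, h1, h2⟩ := h (fun v => decide (g v ∈ α))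
  simp only [decide_eq_decide] at h1 h2
  refine ⟨j, ?_⟩
  by_cases hx : g (C j).1 ∈ α
  · exact Or.inl ⟨hx, h1.mp hx, h2.mp (h1.mp hx)⟩
  · have hy : g (C j).2.1 ∉ α := fun hy => hx (h1.mpr hy)
    have hz : g (C j).2.2 ∉ α := fun hz => hy (h2.mpr hz)
    have hb : ∀ a : A, a ∉ α → a ∈ β := fun a ha => by
      have := Set.mem_univ a
      rw [← hU] at this
      exact this.resolve_left ha
    exact Or.inr ⟨hb _ hx, hb _ hy, hb _ hz⟩
end

section
/- Let A be a finite set and let α, β be subsets of A such that both α \ β and β \ α are nonempty. Let V be a set of variables and let C : Fin K → V × V × V be a family of K clauses. Suppose that for every assignment g : V → A there exists a clause index j such that ρ'(g x_j, g y_j, g z_j) holds, where (x_j, y_j, z_j) = C j. Then for every Boolean assignment f : V → Bool there exists a clause index j such that f takes the same value on all three variables of clause C j. (This is the backward direction of the correctness of the reduction from the complement of monotone 3-not-all-equal-satisfiability.) -/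
/-- backward direction of the correctness of the reduction from the
complement of monotone 3-not-all-equal-satisfiability. -/
theorem stmt4 {A : Type*} [Fintype A] (α β : Set A)
    (hαβ : (α \ β).Nonempty) (hβα : (β \ α).Nonempty)
    {V : Type*} (K : ℕ) (C : Fin K → V × V × V)
    (h : ∀ g : V → A, ∃ j : Fin K,
      rho' α β (g (C j).1) (g (C j).2.1) (g (C j).2.2)) :
    ∀ f : V → Bool, ∃ j : Fin K,
      f (C j).1 = f (C j).2.1 ∧ f (C j).2.1 = f (C j).2.2 := by
  intro f
  obtain ⟨a, haα, haβ⟩ := hαβ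
  obtain ⟨b, hbβ, hbα⟩ := hβα
  obtain ⟨j, hj⟩ := h (fun v => if f v then a else b)
  have kα : ∀ v, (if f v then a else b) ∈ α → f v = true := by
    intro v; cases hv : f v <;> simp_all
  have kβ : ∀ v, (if f v then a else b) ∈ β → f v = false := by
    intro v; cases hv : f v <;> simp_all
  refine ⟨j, ?_⟩
  rcases hj with ⟨h1, h2, h3⟩ | ⟨h1, h2, h3⟩
  · rw [kα _ h1, kα _ h2, kα _ h3]; exact ⟨rfl, rfl⟩
  · rw [kβ _ h1, kβ _ h2, kβ _ h3]; exact ⟨rfl, rfl⟩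
end

section
/- Let A be a finite set and let α, β be strict subsets of A with α ∪ β = A. Let V be a set of variables and let C : Fin K → V × V × V be a family of K clauses. Then the following are equivalent: (1) for every Boolean assignment f : V → Bool there exists a clause index j such that f takes the same value on all three variables of clause C j; (2) for every assignment g : V → A there exists a clause index j such that ρ'(g x_j, g y_j, g z_j) holds, where (x_j, y_j, z_j) = C j. (This is the correctness of the reduction from the complement of monotone 3-not-all-equal-satisfiability underlying the co-NP-hardness of QCSP(Inv(𝔸)) in the EGP case.) -/
/-- correctness of the reduction from the complement of monotone
3-not-all-equal-satisfiability, for strict subsets α, β of A with α ∪ β = A. -/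
theorem stmt5 {A : Type*} [Fintype A] (α β : Set A)
    (hα : α ≠ Set.univ) (hβ : β ≠ Set.univ) (hU : α ∪ β = Set.univ)
    {V : Type*} (K : ℕ) (C : Fin K → V × V × V) :
    (∀ f : V → Bool, ∃ j : Fin K,
        f (C j).1 = f (C j).2.1 ∧ f (C j).2.1 = f (C j).2.2) ↔
      (∀ g : V → A, ∃ j : Fin K,
        rho' α β (g (C j).1) (g (C j).2.1) (g (C j).2.2)) := by
  have hmem : ∀ a : A, a ∉ α → a ∈ β := by
    intro a ha
    have : a ∈ α ∪ β := hU ▸ Set.mem_univ a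
    rcases this with h | h
    · exact absurd h ha
    · exact h
  constructor
  · intro h g
    classical
    obtain ⟨j, h1, h2⟩ := h (fun x => decide (g x ∈ α))
    simp only [decide_eq_decide] at h1 h2
    by_cases hx : g (C j).1 ∈ α
    · exact ⟨j, Or.inl ⟨hx, h1.mp hx, h2.mp (h1.mp hx)⟩⟩
    · exact ⟨j, Or.inr ⟨hmem _ hx, hmem _ (fun h' => hx (h1.mpr h')),
        hmem _ (fun h' => hx (h1.mpr (h2.mpr h')))⟩⟩
  · intro h f
    classical
    obtain ⟨a, ha⟩ : ∃ a, a ∉ β := by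
      by_contra hc; push_neg at hc; exact hβ (Set.eq_univ_of_forall hc)
    obtain ⟨b, hb⟩ : ∃ b, b ∉ α := by
      by_contra hc; push_neg at hc; exact hα (Set.eq_univ_of_forall hc)
    have haα : a ∈ α := by
      by_contra h'; exact ha (hmem a h')
    have hbβ : b ∈ β := hmem b hb
    obtain ⟨j, hj⟩ := h (fun x => if f x then a else b)
    refine ⟨j, ?_⟩
    rcases hj with ⟨h1, h2, h3⟩ | ⟨h1, h2, h3⟩ <;>
      constructor <;>
      · by_cases e1 : f (C j).1 <;> by_cases e2 : f (C j).2.1 <;>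
          by_cases e3 : f (C j).2.2 <;> simp_all
end

section
/- Let A be a finite set, let α, β be subsets of A, and let a ∈ α ∩ β. Let U and E be types (universal and existential variables), let u : U → A be an assignment to the universal variables, and let a finite family of τ-atoms be given: for each j : Fin K an arity k_j ≥ 1 and variable maps x_j, y_j, z_j : Fin k_j → U ⊕ E. For an assignment e : E → A, write eval_e for the evaluation Sum.elim u e. If there exists e : E → A such that for every j, τ_{k_j}(eval_e ∘ x_j, eval_e ∘ y_j, eval_e ∘ z_j) holds, then the constant assignment e₀ sending every existential variable to a also satisfies every atom: for every j, τ_{k_j}(eval_{e₀} ∘ x_j, eval_{e₀} ∘ y_j, eval_{e₀} ∘ z_j) holds. (This is the core of the proof that QCSP over the relations τ_k with constants is in co-NP when α ∩ β ≠ ∅: existential variables can always be instantiated to any element of α ∩ β.) -/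
/-- if an instance made of τ-atoms over universal variables `U`
(with assignment `u`) and existential variables `E` has some satisfying
existential assignment, then instantiating every existential variable to a fixed
element `a ∈ α ∩ β` also satisfies every atom. -/
theorem stmt8 {A : Type*} [Fintype A] (α β : Set A) (a : A) (ha : a ∈ α ∩ β)
    {U E : Type*} (u : U → A) (K : ℕ)
    (k : Fin K → ℕ) (hk : ∀ j, 1 ≤ k j)
    (x y z : (j : Fin K) → Fin (k j) → U ⊕ E)
    (h : ∃ e : E → A, ∀ j : Fin K,
      tau α β (Sum.elim u e ∘ x j) (Sum.elim u e ∘ y j) (Sum.elim u e ∘ z j)) :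
    ∀ j : Fin K,
      tau α β (Sum.elim u (fun _ : E => a) ∘ x j)
        (Sum.elim u (fun _ : E => a) ∘ y j)
        (Sum.elim u (fun _ : E => a) ∘ z j) := by
  obtain ⟨e, he⟩ := h
  intro j
  obtain ⟨i, hi⟩ := he j
  refine ⟨i, ?_⟩
  have conv : ∀ (S : Set A), a ∈ S → ∀ v : U ⊕ E,
      Sum.elim u e v ∈ S → Sum.elim u (fun _ : E => a) v ∈ S := by
    intro S haS v hv
    cases v with
    | inl w => exact hv
    | inr w => exact haS
  rcases hi with ⟨h1, h2, h3⟩ | ⟨h1, h2, h3⟩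
  · exact Or.inl ⟨conv α ha.1 _ h1, conv α ha.1 _ h2, conv α ha.1 _ h3⟩
  · exact Or.inr ⟨conv β ha.2 _ h1, conv β ha.2 _ h2, conv β ha.2 _ h3⟩
end

section
/- Let A be a finite set, let α, β be subsets of A, let a ∈ α ∩ β, and let n ≥ 1. Define the (3n+1)-ary operation f : (Fin (3n+1) → A) → A by: f t = b if there exists b ∈ A such that at least 3n of the 3n+1 coordinates of t equal b (such b is unique when it exists), and f t = a otherwise. Then for every k with 1 ≤ k ≤ n, f preserves τ_k: for every family T : Fin (3n+1) → ((Fin k → A) × (Fin k → A) × (Fin k → A)) such that τ_k((T j).1, (T j).2.1, (T j).2.2) holds for every j, the coordinatewise images x* i = f (fun j => (T j).1 i), y* i = f (fun j => (T j).2.1 i), z* i = f (fun j => (T j).2.2 i) satisfy τ_k(x*, y*, z*). (That is, the (3n+1)-ary near-unanimity operation with default value a ∈ α ∩ β is a polymorphism of τ_k for every k ≤ n.) -/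
/-- Key lemma: if two distinct coordinates of `col` lie in `s` and `a ∈ s`,
then `f col ∈ s`. -/
theorem nu_mem {A : Type*} [Fintype A] [DecidableEq A] (n : ℕ) (a : A)
    (f : (Fin (3 * n + 1) → A) → A)
    (hf₁ : ∀ (t : Fin (3 * n + 1) → A) (b : A),
      3 * n ≤ (Finset.univ.filter fun j => t j = b).card → f t = b)
    (hf₂ : ∀ t : Fin (3 * n + 1) → A,
      (¬ ∃ b : A, 3 * n ≤ (Finset.univ.filter fun j => t j = b).card) → f t = a)
    (s : Set A) (has : a ∈ s) (j₁ j₂ : Fin (3 * n + 1)) (hne : j₁ ≠ j₂)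
    (col : Fin (3 * n + 1) → A) (h1 : col j₁ ∈ s) (h2 : col j₂ ∈ s) :
    f col ∈ s := by
  by_cases h : ∃ b, 3 * n ≤ (Finset.univ.filter fun j => col j = b).card
  · obtain ⟨b, hb⟩ := h
    rw [hf₁ col b hb]
    by_contra hbs
    have h1b : col j₁ ≠ b := fun e => hbs (e ▸ h1)
    have h2b : col j₂ ≠ b := fun e => hbs (e ▸ h2)
    have hsub : ({j₁, j₂} : Finset _) ⊆ Finset.univ.filter fun j => ¬ col j = b := by
      intro j hj
      simp only [Finset.mem_insert, Finset.mem_singleton] at hj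
      rcases hj with rfl | rfl <;> simp [h1b, h2b]
    have hc2 : 2 ≤ (Finset.univ.filter fun j => ¬ col j = b).card := by
      have : ({j₁, j₂} : Finset (Fin (3 * n + 1))).card = 2 := by
        rw [Finset.card_insert_of_notMem (by simpa using hne), Finset.card_singleton]
      rw [← this]
      exact Finset.card_le_card hsub
    have hsum := Finset.card_filter_add_card_filter_not
      (s := (Finset.univ : Finset (Fin (3 * n + 1)))) (p := fun j => col j = b)

    simp only [Finset.card_univ, Fintype.card_fin] at hsum
    omega
  · rw [hf₂ col h]; exact has

/-- the (3n+1)-ary near-unanimity operation with default value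
`a ∈ α ∩ β` is a polymorphism of τ_k for every k ≤ n.  The operation `f` is
characterized by the two hypotheses: `f t = b` whenever at least `3n` of the
`3n+1` coordinates of `t` equal `b`, and `f t = a` when no such `b` exists. -/
theorem stmt9 {A : Type*} [Fintype A] [DecidableEq A] (α β : Set A)
    (a : A) (ha : a ∈ α ∩ β) (n : ℕ) (hn : 1 ≤ n)
    (f : (Fin (3 * n + 1) → A) → A)
    (hf₁ : ∀ (t : Fin (3 * n + 1) → A) (b : A),
      3 * n ≤ (Finset.univ.filter fun j => t j = b).card → f t = b)
    (hf₂ : ∀ t : Fin (3 * n + 1) → A,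
      (¬ ∃ b : A, 3 * n ≤ (Finset.univ.filter fun j => t j = b).card) → f t = a) :
    ∀ k : ℕ, 1 ≤ k → k ≤ n →
      ∀ T : Fin (3 * n + 1) → (Fin k → A) × (Fin k → A) × (Fin k → A),
        (∀ j, tau α β (T j).1 (T j).2.1 (T j).2.2) →
        tau α β (fun i => f (fun j => (T j).1 i))
          (fun i => f (fun j => (T j).2.1 i))
          (fun i => f (fun j => (T j).2.2 i)) := by
  classical
  intro k hk hkn T hT
  choose idx hidx using hT
  set g : Fin (3 * n + 1) → Fin k × Bool := fun j =>
    (idx j, if (T j).1 (idx j) ∈ α ∧ (T j).2.1 (idx j) ∈ α ∧ (T j).2.2 (idx j) ∈ α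
      then true else false) with hg
  have hcard : Fintype.card (Fin k × Bool) < Fintype.card (Fin (3 * n + 1)) := by
    simp only [Fintype.card_prod, Fintype.card_fin, Fintype.card_bool]
    omega
  obtain ⟨j₁, j₂, hne, heq⟩ := Fintype.exists_ne_map_eq_of_card_lt g hcard
  have hidxeq : idx j₁ = idx j₂ := congrArg Prod.fst heq
  have hbooleq := congrArg Prod.snd heq
  simp only [hg] at hbooleq
  refine ⟨idx j₁, ?_⟩
  by_cases hα : (T j₁).1 (idx j₁) ∈ α ∧ (T j₁).2.1 (idx j₁) ∈ α ∧ (T j₁).2.2 (idx j₁) ∈ α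
  · -- α case for j₁, hence also for j₂
    have hα₂ : (T j₂).1 (idx j₂) ∈ α ∧ (T j₂).2.1 (idx j₂) ∈ α ∧ (T j₂).2.2 (idx j₂) ∈ α := by
      by_contra hc
      simp [hα, hc] at hbooleq
    rw [← hidxeq] at hα₂
    exact Or.inl ⟨nu_mem n a f hf₁ hf₂ α ha.1 j₁ j₂ hne _ hα.1 hα₂.1,
      nu_mem n a f hf₁ hf₂ α ha.1 j₁ j₂ hne _ hα.2.1 hα₂.2.1,
      nu_mem n a f hf₁ hf₂ α ha.1 j₁ j₂ hne _ hα.2.2 hα₂.2.2⟩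
  · have hβ : (T j₁).1 (idx j₁) ∈ β ∧ (T j₁).2.1 (idx j₁) ∈ β ∧ (T j₁).2.2 (idx j₁) ∈ β := by
      rcases hidx j₁ with h | h
      · exact absurd h hα
      · exact h
    have hα₂' : ¬ ((T j₂).1 (idx j₂) ∈ α ∧ (T j₂).2.1 (idx j₂) ∈ α ∧ (T j₂).2.2 (idx j₂) ∈ α) := by
      by_contra hc
      simp [hα, hc] at hbooleq
    have hβ₂ : (T j₂).1 (idx j₂) ∈ β ∧ (T j₂).2.1 (idx j₂) ∈ β ∧ (T j₂).2.2 (idx j₂) ∈ β := by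
      rcases hidx j₂ with h | h
      · exact absurd h hα₂'
      · exact h
    rw [← hidxeq] at hβ₂
    exact Or.inr ⟨nu_mem n a f hf₁ hf₂ β ha.2 j₁ j₂ hne _ hβ.1 hβ₂.1,
      nu_mem n a f hf₁ hf₂ β ha.2 j₁ j₂ hne _ hβ.2.1 hβ₂.2.1,
      nu_mem n a f hf₁ hf₂ β ha.2 j₁ j₂ hne _ hβ.2.2 hβ₂.2.2⟩
end
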